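/- Let p : X̃ → X be a closed local homeomorphism from a Hausdorff space X̃ onto a topological space X. Then p has both the path lifting and unique path lifting properties (i.e., p is a semicovering map). -/

import Mathlib

open unitInterval

/-- `p` has the path lifting property. -/
def PathLifting {X' X : Type*} [TopologicalSpace X'] [TopologicalSpace X]
    (p : X' → X) : Prop :=
  ∀ (f : C(I, X)) (x'₀ : X'), p x'₀ = f 0 →
    ∃ g : C(I, X'), (∀ t, p (g t) = f t) ∧ g 0 = x'₀

/-- `p` has the unique path lifting property. -/
def UniquePathLifting {X' X : Type*} [TopologicalSpace X'] [TopologicalSpace X]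
    (p : X' → X) : Prop :=
  ∀ g₁ g₂ : C(I, X'), (∀ t, p (g₁ t) = p (g₂ t)) → g₁ 0 = g₂ 0 → g₁ = g₂

/-!
Uniqueness of lifts holds for any local homeomorphism with Hausdorff domain. For existence,
let `[0, c]` be the largest interval over which a lift exists. Local homeomorphism charts
extend a lift on `[0, c]` a little beyond `c`. To reach `c` from lifts on `[0, t]`, `t < c`,
either the path is constant just before `c`, or there are times `τₙ ↗ c` with `f τₙ ≠ f c`.
In the second case `f c` lies in the closure of the image of the points `xₙ` lifting `f τₙ`;
as `p` is closed, `f c = p w` with `w` in the closure of `{xₙ}` but equal to no `xₙ`, so `w`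
is a cluster point of `(xₙ)`, and a chart at `w` continues one of the partial lifts up to `c`.
-/

open Set Filter Topology

theorem Icc_induction {α : Type*} [ConditionallyCompleteLinearOrder α] {P : α → Prop}
    {a b : α} (hab : a ≤ b) (ha : P a) (hmono : ∀ ⦃s t⦄, t ≤ s → P s → P t)
    (hstep : ∀ s ∈ Ico a b, P s → ∃ s' > s, P s')
    (hlim : ∀ s ∈ Ioc a b, (∀ t ∈ Ico a s, P t) → P s) : P b := by
  set S := {t ∈ Icc a b | P t}
  have hbdd : BddAbove S := ⟨b, fun t ht => ht.1.2⟩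
  have haS : a ∈ S := ⟨⟨le_rfl, hab⟩, ha⟩
  have hac : a ≤ sSup S := le_csSup hbdd haS
  have hcb : sSup S ≤ b := csSup_le ⟨a, haS⟩ fun t ht => ht.1.2
  have hc : P (sSup S) := by
    rcases hac.eq_or_lt with hac | hac
    · rwa [← hac]
    refine hlim _ ⟨hac, hcb⟩ fun t ht => ?_
    obtain ⟨s, hs, hts⟩ := exists_lt_of_lt_csSup ⟨a, haS⟩ ht.2
    exact hmono hts.le hs.2
  rcases hcb.eq_or_lt with hcb | hcb
  · rwa [← hcb]
  obtain ⟨s', hs', hPs'⟩ := hstep _ ⟨hac, hcb⟩ hc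
  have hmin : min s' b ∈ S := ⟨⟨hac.trans (le_min hs'.le hcb.le), min_le_right _ _⟩,
    hmono (min_le_left _ _) hPs'⟩
  exact absurd (le_csSup hbdd hmin) (not_le.mpr (lt_min hs' hcb))

section Lifting

variable {X' X : Type*} [TopologicalSpace X'] {p : X' → X}

variable (p) in
/-- The lift is continuous on all of `ℝ` but has to lift `f` only on `[0, s]`, so that partial
lifts can be glued by `if t ≤ t₁ then … else …`. -/
def HasLiftOnIcc (f : ℝ → X) (x₀ : X') (s : ℝ) : Prop :=
  ∃ g : ℝ → X', Continuous g ∧ g 0 = x₀ ∧ EqOn (p ∘ g) f (Icc 0 s)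

variable {f : ℝ → X} {x₀ : X'} {r s : ℝ}

theorem hasLiftOnIcc_zero (hx₀ : p x₀ = f 0) : HasLiftOnIcc p f x₀ 0 :=
  ⟨fun _ => x₀, continuous_const, rfl, fun t ht => by
    rw [show t = 0 from le_antisymm ht.2 ht.1]; exact hx₀⟩

theorem HasLiftOnIcc.mono (h : HasLiftOnIcc p f x₀ s) (hrs : r ≤ s) : HasLiftOnIcc p f x₀ r :=
  let ⟨g, hg, hg0, hgf⟩ := h
  ⟨g, hg, hg0, hgf.mono (Icc_subset_Icc_right hrs)⟩

theorem HasLiftOnIcc.of_forall_Icc_eq (h : HasLiftOnIcc p f x₀ r) (hr : 0 ≤ r) (hrs : r ≤ s)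
    (hconst : ∀ t ∈ Icc r s, f t = f s) : HasLiftOnIcc p f x₀ s := by
  obtain ⟨g, hg, hg0, hgf⟩ := h
  refine ⟨fun t => g (min t r), hg.comp (continuous_id.min continuous_const),
    by simpa [min_eq_left hr] using hg0, fun t ht => ?_⟩
  rcases le_total t r with htr | hrt
  · simpa [min_eq_left htr] using hgf ⟨ht.1, htr⟩
  · simp only [Function.comp_apply, min_eq_right hrt]
    exact (hgf ⟨hr, le_rfl⟩).trans
      ((hconst r ⟨le_rfl, hrs⟩).trans (hconst t ⟨hrt, ht.2⟩).symm)

variable [TopologicalSpace X]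

theorem IsClosedMap.exists_mapClusterPt_of_tendsto [T1Space X'] (hp : IsClosedMap p)
    {x : ℕ → X'} {y : X} (hy : Tendsto (p ∘ x) atTop (𝓝 y)) (hne : ∀ n, p (x n) ≠ y) :
    ∃ w, p w = y ∧ MapClusterPt w atTop x := by
  have hy_cl : y ∈ closure (p '' range x) :=
    mem_closure_of_tendsto hy (Eventually.of_forall fun n => mem_image_of_mem p (mem_range_self n))
  obtain ⟨w, hw_cl, rfl⟩ := hp.closure_image_subset _ hy_cl
  refine ⟨w, rfl, mapClusterPt_iff_frequently.mpr fun U hU => ?_⟩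
  rw [Nat.frequently_atTop_iff_infinite]
  intro hfin
  have hw : w ∉ x '' {n | x n ∈ U} := fun ⟨n, _, hn⟩ => hne n (congrArg p hn)
  obtain ⟨_, ⟨hzU, hz⟩, n, rfl⟩ := mem_closure_iff_nhds.mp hw_cl _
    (sdiff_mem hU ((hfin.image x).isClosed.compl_mem_nhds hw))
  exact hz ⟨n, hzU, rfl⟩

theorem hasLiftOnIcc_of_chart (e : OpenPartialHomeomorph X' X) (hpe : p = e)
    (hf : Continuous f) {g : ℝ → X'} (hg : Continuous g) (hg0 : g 0 = x₀) {t₁ : ℝ}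
    (ht₁ : 0 ≤ t₁) (ht₁s : t₁ ≤ s) (hgf : EqOn (p ∘ g) f (Icc 0 t₁))
    (hgt₁ : g t₁ ∈ e.source) (hfe : MapsTo f (Icc t₁ s) e.target) :
    HasLiftOnIcc p f x₀ s := by
  set clamp : ℝ → ℝ := fun t => max t₁ (min t s)
  have hclamp : ∀ t, clamp t ∈ Icc t₁ s := fun t =>
    ⟨le_max_left _ _, max_le ht₁s (min_le_right _ _)⟩
  have hclamp_of_mem : ∀ t ∈ Icc t₁ s, clamp t = t := fun t ht => by
    simp only [clamp, min_eq_left ht.2, max_eq_right ht.1]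
  have hcont : Continuous fun t => e.symm (f (clamp t)) :=
    e.continuousOn_symm.comp_continuous
      (hf.comp (continuous_const.max (continuous_id.min continuous_const))) fun t => hfe (hclamp t)
  have hglue : ∀ t, t = t₁ → g t = e.symm (f (clamp t)) := by
    rintro t rfl
    rw [hclamp_of_mem t ⟨le_rfl, ht₁s⟩, ← hgf ⟨ht₁, le_rfl⟩, Function.comp_apply, hpe,
      e.left_inv hgt₁]
  refine ⟨fun t => if t ≤ t₁ then g t else e.symm (f (clamp t)),
    hg.if_le hcont continuous_id continuous_const hglue, by simp [ht₁, hg0], fun t ht => ?_⟩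
  by_cases htt₁ : t ≤ t₁
  · simpa [htt₁] using hgf ⟨ht.1, htt₁⟩
  · have hmem : t ∈ Icc t₁ s := ⟨(not_le.mp htt₁).le, ht.2⟩
    simp only [Function.comp_apply, if_neg htt₁, hclamp_of_mem t hmem, hpe]
    exact e.right_inv (hfe hmem)

theorem HasLiftOnIcc.exists_gt (hp : IsLocalHomeomorph p) (hf : Continuous f) (hs : 0 ≤ s)
    (h : HasLiftOnIcc p f x₀ s) : ∃ s' > s, HasLiftOnIcc p f x₀ s' := by
  obtain ⟨g, hg, hg0, hgf⟩ := h
  obtain ⟨e, hge, hpe⟩ := hp (g s)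
  have hfs : f s ∈ e.target := by
    rw [← hgf ⟨hs, le_rfl⟩, Function.comp_apply, hpe]; exact e.map_source hge
  obtain ⟨u, hsu, hu⟩ := exists_Ico_subset_of_mem_nhds
    (hf.continuousAt.preimage_mem_nhds (e.open_target.mem_nhds hfs)) ⟨s + 1, by linarith⟩
  refine ⟨(s + u) / 2, by linarith, hasLiftOnIcc_of_chart e hpe hf hg hg0 hs (by linarith) hgf
    hge fun t ht => hu ⟨ht.1, by linarith [ht.2]⟩⟩

theorem hasLiftOnIcc_of_forall_lt [T1Space X'] (hp : IsLocalHomeomorph p)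
    (hclosed : IsClosedMap p) (hf : Continuous f) (hs : 0 < s)
    (h : ∀ t ∈ Ico 0 s, HasLiftOnIcc p f x₀ t) : HasLiftOnIcc p f x₀ s := by
  by_cases hconst : ∀ᶠ t in 𝓝[<] s, f t = f s
  · obtain ⟨l, hls, hl⟩ :=
      mem_nhdsLT_iff_exists_Ioo_subset.mp (hconst.and (Ioo_mem_nhdsLT hs))
    have hls : l < s := hls
    have hr : (l + s) / 2 ∈ Ioo l s := ⟨by linarith, by linarith⟩
    have hr0 : 0 ≤ (l + s) / 2 := (hl hr).2.1.le
    refine (h _ ⟨hr0, hr.2⟩).of_forall_Icc_eq hr0 hr.2.le fun t ht => ?_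
    rcases ht.2.eq_or_lt with rfl | hts
    · rfl
    · exact (hl ⟨hr.1.trans_le ht.1, hts⟩).1
  obtain ⟨τ, hτ, hτs⟩ := exists_seq_forall_of_frequently
    ((not_eventually.mp hconst).and_eventually (Ioo_mem_nhdsLT hs))
  choose g hg hg0 hgf using fun n => h (τ n) ⟨(hτs n).2.1.le, (hτs n).2.2⟩
  have hpg : ∀ n, p (g n (τ n)) = f (τ n) := fun n => hgf n ⟨(hτs n).2.1.le, le_rfl⟩
  have hτ' : Tendsto τ atTop (𝓝 s) := tendsto_nhds_of_tendsto_nhdsWithin hτ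
  obtain ⟨w, hw, hcluster⟩ := hclosed.exists_mapClusterPt_of_tendsto (x := fun n => g n (τ n))
    (by simpa only [Function.comp_def, hpg] using (hf.tendsto s).comp hτ')
    fun n => by simpa only [hpg] using (hτs n).1
  obtain ⟨e, hwe, hpe⟩ := hp w
  have hfs : f s ∈ e.target := by rw [← hw, hpe]; exact e.map_source hwe
  obtain ⟨l, hls, hl⟩ := exists_Ioc_subset_of_mem_nhds
    (hf.continuousAt.preimage_mem_nhds (e.open_target.mem_nhds hfs)) ⟨0, hs⟩
  obtain ⟨n, hn_src, hn_l⟩ := ((mapClusterPt_iff_frequently.mp hcluster _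
    (e.open_source.mem_nhds hwe)).and_eventually (hτ'.eventually (Ioi_mem_nhds hls))).exists
  exact hasLiftOnIcc_of_chart e hpe hf (hg n) (hg0 n) (hτs n).2.1.le (hτs n).2.2.le (hgf n)
    hn_src fun t ht => hl ⟨lt_of_lt_of_le hn_l ht.1, ht.2⟩

theorem IsLocalHomeomorph.hasLiftOnIcc_of_isClosedMap [T1Space X'] (hp : IsLocalHomeomorph p)
    (hclosed : IsClosedMap p) (hf : Continuous f) (hx₀ : p x₀ = f 0) (hs : 0 ≤ s) :
    HasLiftOnIcc p f x₀ s :=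
  Icc_induction hs (hasLiftOnIcc_zero hx₀) (fun _ _ hts h => h.mono hts)
    (fun _ ht h => h.exists_gt hp hf ht.1)
    (fun _ ht h => hasLiftOnIcc_of_forall_lt hp hclosed hf ht.1 h)

theorem IsLocalHomeomorph.pathLifting_of_isClosedMap [T1Space X'] (hp : IsLocalHomeomorph p)
    (hclosed : IsClosedMap p) : PathLifting p := by
  intro f x₀ hx₀
  obtain ⟨g, hg, hg0, hgf⟩ := hp.hasLiftOnIcc_of_isClosedMap hclosed
    (f.continuous.Icc_extend' (h := zero_le_one)) (by rwa [IccExtend_left]) zero_le_one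
  exact ⟨⟨g ∘ Subtype.val, hg.comp continuous_subtype_val⟩,
    fun t => (hgf t.2).trans (IccExtend_val _ f t), hg0⟩

theorem IsLocalHomeomorph.uniquePathLifting [T2Space X'] (hp : IsLocalHomeomorph p) :
    UniquePathLifting p := fun g₁ g₂ h h0 =>
  ContinuousMap.ext <| congr_fun ((T2Space.isSeparatedMap p).eq_of_comp_eq
    hp.isLocallyInjective g₁.continuous g₂.continuous (funext h) 0 h0)

end Lifting

theorem stmt_7_general {X' X : Type*} [TopologicalSpace X'] [TopologicalSpace X]
    [T2Space X'] (p : X' → X) (hp : IsLocalHomeomorph p)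
    (hclosed : IsClosedMap p) :
    PathLifting p ∧ UniquePathLifting p :=
  ⟨hp.pathLifting_of_isClosedMap hclosed, hp.uniquePathLifting⟩

/-- a closed local homeomorphism from a Hausdorff space onto a
space `X` has the path lifting and unique path lifting properties, i.e. it is
a semicovering map. -/
theorem stmt_7 {X' X : Type*} [TopologicalSpace X'] [TopologicalSpace X]
    [T2Space X'] (p : X' → X) (hp : IsLocalHomeomorph p)
    (hclosed : IsClosedMap p) (hsurj : Function.Surjective p) :
    PathLifting p ∧ UniquePathLifting p :=
  stmt_7_general p hp hclosed
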